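/- Let g be a Lie algebra on basis e₁,…,e_n (i ∈ {5,…,n}) with only possibly nonzero structure constants C²₁₄, C²₁ᵢ, C²₁₃, Cⁱ₁₃, C⁴₁ᵢ, C²₃ᵢ, C⁴₁₃, C⁴₃ᵢ. Then: (1) the Jacobi identity is equivalent to C²₁₄·C⁴₃ᵢ = 0 for all i; (2) g is nilpotent, at most 4-step; (3) if C²₁₄ = 0, then g is at most 3-step nilpotent. -/

import Mathlib

/-!
Give `e₁, e₃` degree 1, the `eᵢ` degree 2, `e₄` degree 3 and `e₂` degree 4. Every bracket relation
respects this grading, so the spans `F m` of the basis vectors of degree `≥ m` satisfy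
`[F p, F q] ⊆ F (p + q)`; since `F 1` is everything and `F 5 = 0`, all 5-fold brackets vanish.
Only `[e₁, e₄] = C²₁₄ e₂` forces `e₂` up to degree 4: if `C²₁₄ = 0`, degree 3 will do and `F 4 = 0`.

The Jacobiator is alternating and trilinear, so it suffices to evaluate it on basis triples
`i < j < k`. By the grading it lies in `F (deg i + deg j + deg k)`, which is zero except for the
triples `(e₁, e₃, eᵢ)`, where the Jacobiator is `C²₁₄ C⁴₃ᵢ e₂`.
-/

open Submodule

theorem forall_triple_of_forall_lt {ι : Type*} [LinearOrder ι] {P : ι → ι → ι → Prop}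
    (rotate : ∀ {i j k}, P i j k → P j k i) (swap : ∀ {i j k}, P i j k → P j i k)
    (diag : ∀ i k, P i i k) (lt : ∀ i j k, i < j → j < k → P i j k) (i j k : ι) :
    P i j k := by
  have hij := lt_trichotomy i j
  have hjk := lt_trichotomy j k
  have hik := lt_trichotomy i k
  rcases hij with hij | hij | hij <;> rcases hjk with hjk | hjk | hjk <;>
    rcases hik with hik | hik | hik
  all_goals first
    | (exfalso; order)
    | (subst_vars; first
        | exact diag _ _
        | exact rotate (rotate (diag _ _))
        | exact rotate (diag _ _))
    | exact lt _ _ _ ‹_› ‹_›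
    | exact rotate (rotate (lt _ _ _ ‹_› ‹_›))
    | exact rotate (lt _ _ _ ‹_› ‹_›)
    | exact swap (lt _ _ _ ‹_› ‹_›)
    | exact swap (rotate (rotate (lt _ _ _ ‹_› ‹_›)))
    | exact swap (rotate (lt _ _ _ ‹_› ‹_›))

section

variable {R V : Type*} [CommRing R] [AddCommGroup V] [Module R V]

section Jacobiator

variable (μ : V →ₗ[R] V →ₗ[R] V)

def jacobiator (x y : V) : V →ₗ[R] V :=
  μ x ∘ₗ μ y + μ y ∘ₗ μ.flip x + μ.flip (μ x y)

variable {μ}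

theorem jacobiator_apply (x y z : V) :
    jacobiator μ x y z = μ x (μ y z) + μ y (μ z x) + μ z (μ x y) := rfl

theorem jacobiator_rotate (x y z : V) : jacobiator μ x y z = jacobiator μ y z x := by
  simp only [jacobiator_apply]; abel

theorem jacobiator_swap (hμ : μ.IsAlt) (x y z : V) :
    jacobiator μ y x z = -jacobiator μ x y z := by
  simp only [jacobiator_apply, ← hμ.neg x z, ← hμ.neg z y, ← hμ.neg x y, map_neg]
  abel

theorem jacobiator_self (hμ : μ.IsAlt) (x z : V) : jacobiator μ x x z = 0 := by
  rw [jacobiator_apply, ← hμ.neg x z, map_neg, hμ.self_eq_zero, map_zero]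
  abel

theorem jacobiator_eq_zero_of_basis {ι : Type*} (b : Module.Basis ι R V)
    (h : ∀ i j k, jacobiator μ (b i) (b j) (b k) = 0) (x y z : V) : jacobiator μ x y z = 0 := by
  have h₁ : ∀ i j, jacobiator μ (b i) (b j) = 0 := fun i j => b.ext (h i j)
  have h₂ : ∀ z i, jacobiator μ z (b i) = 0 := fun z i => b.ext fun j => by
    rw [LinearMap.zero_apply, jacobiator_rotate, h₁, LinearMap.zero_apply]
  have h₃ : ∀ y z, jacobiator μ y z = 0 := fun y z => b.ext fun k => by
    rw [LinearMap.zero_apply, jacobiator_rotate, h₂, LinearMap.zero_apply]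
  rw [h₃, LinearMap.zero_apply]

theorem jacobiator_eq_zero_of_basis_lt {ι : Type*} [LinearOrder ι] (hμ : μ.IsAlt)
    (b : Module.Basis ι R V)
    (h : ∀ i j k, i < j → j < k → jacobiator μ (b i) (b j) (b k) = 0) (x y z : V) :
    jacobiator μ x y z = 0 :=
  jacobiator_eq_zero_of_basis b
    (forall_triple_of_forall_lt (fun h => by rwa [← jacobiator_rotate])
      (fun h => by rw [jacobiator_swap hμ, h, neg_zero]) (fun _ _ => jacobiator_self hμ _ _) h)
    x y z

end Jacobiator

section Filtration

variable {ι : Type*} (b : Module.Basis ι R V) (deg : ι → ℕ)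

def degFiltration (m : ℕ) : Submodule R V :=
  span R (b '' {i | m ≤ deg i})

variable {b deg}

theorem basis_mem_degFiltration {m : ℕ} {i : ι} (h : m ≤ deg i) :
    b i ∈ degFiltration b deg m :=
  subset_span ⟨i, h, rfl⟩

theorem degFiltration_antitone : Antitone (degFiltration b deg) :=
  fun _ _ h => span_mono (Set.image_mono fun _ hi => le_trans h hi)

theorem mem_degFiltration_of_forall_le {m : ℕ} (h : ∀ i, m ≤ deg i) (x : V) :
    x ∈ degFiltration b deg m := by
  rw [degFiltration, Set.eq_univ_of_forall (s := {i | m ≤ deg i}) h, Set.image_univ, b.span_eq]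
  exact mem_top

theorem eq_zero_of_mem_degFiltration {m : ℕ} (h : ∀ i, deg i < m) {x : V}
    (hx : x ∈ degFiltration b deg m) : x = 0 := by
  rwa [degFiltration, Set.eq_empty_of_forall_notMem (s := {i | m ≤ deg i}) fun i hi =>
    (h i).not_ge hi, Set.image_empty, span_empty, mem_bot] at hx

theorem apply_mem_degFiltration {μ : V →ₗ[R] V →ₗ[R] V}
    (hμ : ∀ i j, μ (b i) (b j) ∈ degFiltration b deg (deg i + deg j))
    {p q : ℕ} {x y : V} (hx : x ∈ degFiltration b deg p) (hy : y ∈ degFiltration b deg q) :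
    μ x y ∈ degFiltration b deg (p + q) := by
  have hle : map₂ μ (degFiltration b deg p) (degFiltration b deg q) ≤
      degFiltration b deg (p + q) := by
    rw [degFiltration, degFiltration, map₂_span_span, span_le]
    rintro _ ⟨_, ⟨i, hi, rfl⟩, _, ⟨j, hj, rfl⟩, rfl⟩
    exact degFiltration_antitone (add_le_add hi hj) (hμ i j)
  exact hle (apply_mem_map₂ μ hx hy)

theorem jacobiator_mem_degFiltration {μ : V →ₗ[R] V →ₗ[R] V}
    (hμ : ∀ i j, μ (b i) (b j) ∈ degFiltration b deg (deg i + deg j))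
    {p q r : ℕ} {x y z : V} (hx : x ∈ degFiltration b deg p) (hy : y ∈ degFiltration b deg q)
    (hz : z ∈ degFiltration b deg r) : jacobiator μ x y z ∈ degFiltration b deg (p + q + r) := by
  rw [jacobiator_apply]
  refine add_mem (add_mem ?_ ?_) ?_
  · exact add_assoc p q r ▸ apply_mem_degFiltration hμ hx (apply_mem_degFiltration hμ hy hz)
  · exact (show q + (r + p) = p + q + r by ring) ▸
      apply_mem_degFiltration hμ hy (apply_mem_degFiltration hμ hz hx)
  · exact (show r + (p + q) = p + q + r by ring) ▸
      apply_mem_degFiltration hμ hz (apply_mem_degFiltration hμ hx hy)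

end Filtration

variable {n : ℕ}

theorem Fin.eq_or_four_le (hn : 4 ≤ n) (j : Fin n) :
    j = Fin.castLE hn 0 ∨ j = Fin.castLE hn 1 ∨ j = Fin.castLE hn 2 ∨ j = Fin.castLE hn 3 ∨
      4 ≤ (j : ℕ) := by
  rcases j with ⟨_ | _ | _ | _ | j, hj⟩ <;> simp [Fin.ext_iff]

/-- Field `bracketₐᵦ` gives `[eₐ, eᵦ]`, where `eₐ = b (a - 1)` for `a ≤ 4`, while `i, j` index
the basis vectors `b i` with `4 ≤ i`. -/
structure RicciFlatBrackets (hn : 4 ≤ n) (b : Module.Basis (Fin n) R V)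
    (μ : V →ₗ[R] V →ₗ[R] V) (c214 c213 c413 : R) (ci13 c21 c41 c23 c43 : Fin n → R) : Prop where
  isAlt : μ.IsAlt
  bracket₁₃ : μ (b (Fin.castLE hn 0)) (b (Fin.castLE hn 2)) =
    c213 • b (Fin.castLE hn 1) + c413 • b (Fin.castLE hn 3) +
      ∑ i ∈ Finset.univ.filter (fun i : Fin n => 4 ≤ (i : ℕ)), ci13 i • b i
  bracket₁₄ : μ (b (Fin.castLE hn 0)) (b (Fin.castLE hn 3)) = c214 • b (Fin.castLE hn 1)
  bracket₁ᵢ : ∀ i : Fin n, 4 ≤ (i : ℕ) →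
    μ (b (Fin.castLE hn 0)) (b i) = c21 i • b (Fin.castLE hn 1) + c41 i • b (Fin.castLE hn 3)
  bracket₃ᵢ : ∀ i : Fin n, 4 ≤ (i : ℕ) →
    μ (b (Fin.castLE hn 2)) (b i) = c23 i • b (Fin.castLE hn 1) + c43 i • b (Fin.castLE hn 3)
  bracket₁₂ : μ (b (Fin.castLE hn 0)) (b (Fin.castLE hn 1)) = 0
  bracket₂₃ : μ (b (Fin.castLE hn 1)) (b (Fin.castLE hn 2)) = 0
  bracket₂₄ : μ (b (Fin.castLE hn 1)) (b (Fin.castLE hn 3)) = 0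
  bracket₂ᵢ : ∀ i : Fin n, 4 ≤ (i : ℕ) → μ (b (Fin.castLE hn 1)) (b i) = 0
  bracket₃₄ : μ (b (Fin.castLE hn 2)) (b (Fin.castLE hn 3)) = 0
  bracket₄ᵢ : ∀ i : Fin n, 4 ≤ (i : ℕ) → μ (b (Fin.castLE hn 3)) (b i) = 0
  bracketᵢⱼ : ∀ i j : Fin n, 4 ≤ (i : ℕ) → 4 ≤ (j : ℕ) → μ (b i) (b j) = 0

namespace RicciFlatBrackets

def degree (d : ℕ) (i : Fin n) : ℕ :=
  if (i : ℕ) = 0 ∨ (i : ℕ) = 2 then 1 else if (i : ℕ) = 1 then d else if (i : ℕ) = 3 then 3 else 2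

theorem eq_of_degree_add_lt_five {i j k : Fin n} (hij : i < j) (hjk : j < k)
    (h : degree 4 i + degree 4 j + degree 4 k < 5) :
    (i : ℕ) = 0 ∧ (j : ℕ) = 2 ∧ 4 ≤ (k : ℕ) := by
  rw [Fin.lt_def] at hij hjk
  simp only [degree] at h
  split_ifs at h <;> omega

theorem one_le_degree {d : ℕ} (hd : 1 ≤ d) (i : Fin n) : 1 ≤ degree d i := by
  unfold degree; split_ifs <;> omega

theorem degree_le {d : ℕ} (hd : 3 ≤ d) (i : Fin n) : degree d i ≤ d := by
  unfold degree; split_ifs <;> omega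

theorem degree_of_four_le {d : ℕ} {i : Fin n} (hi : 4 ≤ (i : ℕ)) : degree d i = 2 := by
  unfold degree; split_ifs <;> omega

variable {hn : 4 ≤ n} {b : Module.Basis (Fin n) R V} {μ : V →ₗ[R] V →ₗ[R] V}
  {c214 c213 c413 : R} {ci13 c21 c41 c23 c43 : Fin n → R}

theorem basis_apply_mem_degFiltration
    (h : RicciFlatBrackets hn b μ c214 c213 c413 ci13 c21 c41 c23 c43)
    {d : ℕ} (hd : 3 ≤ d) (hd₄ : c214 = 0 ∨ 4 ≤ d) (i j : Fin n) :
    μ (b i) (b j) ∈ degFiltration b (degree d) (degree d i + degree d j) := by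
  wlog hij : i ≤ j generalizing i j
  · rw [← h.isAlt.neg, add_comm]
    exact neg_mem (this j i (le_of_not_ge hij))
  have mem : ∀ {m : ℕ} {k : Fin n}, m ≤ degree d k → b k ∈ degFiltration b (degree d) m :=
    basis_mem_degFiltration
  rcases Fin.eq_or_four_le hn i with rfl | rfl | rfl | rfl | hi <;>
    rcases Fin.eq_or_four_le hn j with rfl | rfl | rfl | rfl | hj
  all_goals try first
    | (exfalso; simp [Fin.le_def] at hij <;> omega)
    | (rw [h.isAlt.self_eq_zero]; exact zero_mem _)
  · rw [h.bracket₁₂]; exact zero_mem _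
  · rw [h.bracket₁₃]
    refine add_mem (add_mem (smul_mem _ _ (mem ?_)) (smul_mem _ _ (mem ?_)))
      (sum_mem fun k hk => smul_mem _ _ (mem ?_))
    · simp [degree]; omega
    · simp [degree]
    · rw [degree_of_four_le (Finset.mem_filter.1 hk).2]; simp [degree]
  · rw [h.bracket₁₄]
    rcases hd₄ with hc | hd₄
    · rw [hc, zero_smul]; exact zero_mem _
    · exact smul_mem _ _ (mem (by simp [degree]; omega))
  · rw [h.bracket₁ᵢ j hj, degree_of_four_le hj]
    exact add_mem (smul_mem _ _ (mem (by simp [degree]; omega)))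
      (smul_mem _ _ (mem (by simp [degree])))
  · rw [h.bracket₂₃]; exact zero_mem _
  · rw [h.bracket₂₄]; exact zero_mem _
  · rw [h.bracket₂ᵢ j hj]; exact zero_mem _
  · rw [h.bracket₃₄]; exact zero_mem _
  · rw [h.bracket₃ᵢ j hj, degree_of_four_le hj]
    exact add_mem (smul_mem _ _ (mem (by simp [degree]; omega)))
      (smul_mem _ _ (mem (by simp [degree])))
  · rw [h.bracket₄ᵢ j hj]; exact zero_mem _
  · rw [h.bracketᵢⱼ i j hi hj]; exact zero_mem _

theorem jacobiator_basis₁₃ᵢ (h : RicciFlatBrackets hn b μ c214 c213 c413 ci13 c21 c41 c23 c43)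
    {k : Fin n} (hk : 4 ≤ (k : ℕ)) :
    jacobiator μ (b (Fin.castLE hn 0)) (b (Fin.castLE hn 2)) (b k) =
      (c214 * c43 k) • b (Fin.castLE hn 1) := by
  have h₃₂ : μ (b (Fin.castLE hn 2)) (b (Fin.castLE hn 1)) = 0 := by
    rw [← h.isAlt.neg, h.bracket₂₃, neg_zero]
  have hk₂ : μ (b k) (b (Fin.castLE hn 1)) = 0 := by rw [← h.isAlt.neg, h.bracket₂ᵢ k hk, neg_zero]
  have hk₄ : μ (b k) (b (Fin.castLE hn 3)) = 0 := by rw [← h.isAlt.neg, h.bracket₄ᵢ k hk, neg_zero]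
  have hk₁₃ : ∑ l ∈ Finset.univ.filter (fun i : Fin n => 4 ≤ (i : ℕ)),
      ci13 l • μ (b k) (b l) = 0 :=
    Finset.sum_eq_zero fun l hl => by
      rw [h.bracketᵢⱼ k l hk (Finset.mem_filter.1 hl).2, smul_zero]
  rw [jacobiator_apply, h.bracket₃ᵢ k hk, ← h.isAlt.neg _ (b k), h.bracket₁ᵢ k hk, h.bracket₁₃]
  simp only [map_add, map_smul, map_neg, map_sum, h.bracket₁₂, h.bracket₁₄, h.bracket₃₄, h₃₂, hk₂,
    hk₄, hk₁₃, smul_zero, smul_smul, mul_comm, add_zero, zero_add, neg_zero]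

theorem apply_mem_degFiltration_succ
    (h : RicciFlatBrackets hn b μ c214 c213 c413 ci13 c21 c41 c23 c43)
    {d : ℕ} (hd : 3 ≤ d) (hd₄ : c214 = 0 ∨ 4 ≤ d) (x : V) {y : V} {m : ℕ}
    (hy : y ∈ degFiltration b (degree d) m) : μ x y ∈ degFiltration b (degree d) (m + 1) := by
  rw [add_comm]
  exact apply_mem_degFiltration (h.basis_apply_mem_degFiltration hd hd₄)
    (mem_degFiltration_of_forall_le (one_le_degree (by omega)) x) hy

theorem apply_apply_apply_apply_eq_zero
    (h : RicciFlatBrackets hn b μ c214 c213 c413 ci13 c21 c41 c23 c43)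
    (x₁ x₂ x₃ x₄ x₅ : V) : μ x₁ (μ x₂ (μ x₃ (μ x₄ x₅))) = 0 := by
  have hF := h.apply_mem_degFiltration_succ (d := 4) (by norm_num) (Or.inr le_rfl)
  have hV : ∀ x : V, x ∈ degFiltration b (degree 4) 1 :=
    mem_degFiltration_of_forall_le (one_le_degree (by norm_num))
  exact eq_zero_of_mem_degFiltration (m := 5)
    (fun i => Nat.lt_succ_of_le (degree_le (by norm_num) i))
    (hF x₁ (hF x₂ (hF x₃ (hF x₄ (hV x₅)))))

theorem apply_apply_apply_eq_zero
    (h : RicciFlatBrackets hn b μ c214 c213 c413 ci13 c21 c41 c23 c43)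
    (hc : c214 = 0) (x₁ x₂ x₃ x₄ : V) : μ x₁ (μ x₂ (μ x₃ x₄)) = 0 := by
  have hF := h.apply_mem_degFiltration_succ (d := 3) le_rfl (Or.inl hc)
  have hV : ∀ x : V, x ∈ degFiltration b (degree 3) 1 :=
    mem_degFiltration_of_forall_le (one_le_degree (by norm_num))
  exact eq_zero_of_mem_degFiltration (m := 4) (fun i => Nat.lt_succ_of_le (degree_le le_rfl i))
    (hF x₁ (hF x₂ (hF x₃ (hV x₄))))

theorem jacobiator_eq_zero_iff [IsDomain R]
    (h : RicciFlatBrackets hn b μ c214 c213 c413 ci13 c21 c41 c23 c43) :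
    (∀ x y z : V, jacobiator μ x y z = 0) ↔ ∀ k : Fin n, 4 ≤ (k : ℕ) → c214 * c43 k = 0 := by
  refine ⟨fun hJ k hk => ?_,
    fun hc => jacobiator_eq_zero_of_basis_lt h.isAlt b fun i j k hij hjk => ?_⟩
  · have hJk := h.jacobiator_basis₁₃ᵢ hk
    rw [hJ] at hJk
    exact (b.smul_eq_zero.1 hJk.symm).resolve_right (b.ne_zero _)
  by_cases hs : 5 ≤ degree 4 i + degree 4 j + degree 4 k
  · have hF := h.basis_apply_mem_degFiltration (d := 4) (by norm_num) (Or.inr le_rfl)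
    exact eq_zero_of_mem_degFiltration (fun l => Nat.lt_succ_of_le (degree_le (by norm_num) l))
      (degFiltration_antitone hs (jacobiator_mem_degFiltration hF
        (basis_mem_degFiltration le_rfl) (basis_mem_degFiltration le_rfl)
        (basis_mem_degFiltration le_rfl)))
  obtain ⟨hi, hj, hk⟩ := eq_of_degree_add_lt_five hij hjk (not_le.1 hs)
  rw [show i = Fin.castLE hn 0 from Fin.ext hi, show j = Fin.castLE hn 2 from Fin.ext hj,
    h.jacobiator_basis₁₃ᵢ hk, hc k hk, zero_smul]

end RicciFlatBrackets

end

/-- Ricci-flat class, case [3/4,1/2]. Let the antisymmetric bracket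
`μ` on an `n`-dimensional space with basis `e₁,…,e_n` (`b 0 = e₁`, …, `b 3 = e₄`,
`b i = e_{i+1}` for `i ≥ 4`) have only the possibly nonzero structure constants
`C²₁₄, C²₁ᵢ, C²₁₃, Cⁱ₁₃, C⁴₁ᵢ, C²₃ᵢ, C⁴₁₃, C⁴₃ᵢ`. Then (1) the Jacobi identity holds
iff `C²₁₄ · C⁴₃ᵢ = 0` for all `i`; (2) the algebra is at most 4-step nilpotent;
(3) if `C²₁₄ = 0` it is at most 3-step nilpotent. -/
theorem ricci_flat_class_nilpotent
    (n : ℕ) (hn : 4 ≤ n) (V : Type*) [AddCommGroup V] [Module ℝ V]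
    (b : Module.Basis (Fin n) ℝ V)
    (μ : V →ₗ[ℝ] V →ₗ[ℝ] V)
    (halt : ∀ x y : V, μ x y = - μ y x)
    (c214 c213 c413 : ℝ) (ci13 c21 c41 c23 c43 : Fin n → ℝ)
    (h13 : μ (b ⟨0, by omega⟩) (b ⟨2, by omega⟩) =
      c213 • b ⟨1, by omega⟩ + c413 • b ⟨3, by omega⟩ +
        ∑ i ∈ Finset.univ.filter (fun i : Fin n => 4 ≤ (i : ℕ)), ci13 i • b i)
    (h14 : μ (b ⟨0, by omega⟩) (b ⟨3, by omega⟩) = c214 • b ⟨1, by omega⟩)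
    (h1i : ∀ i : Fin n, 4 ≤ (i : ℕ) →
      μ (b ⟨0, by omega⟩) (b i) = c21 i • b ⟨1, by omega⟩ + c41 i • b ⟨3, by omega⟩)
    (h3i : ∀ i : Fin n, 4 ≤ (i : ℕ) →
      μ (b ⟨2, by omega⟩) (b i) = c23 i • b ⟨1, by omega⟩ + c43 i • b ⟨3, by omega⟩)
    (h12 : μ (b ⟨0, by omega⟩) (b ⟨1, by omega⟩) = 0)
    (h23 : μ (b ⟨1, by omega⟩) (b ⟨2, by omega⟩) = 0)
    (h24 : μ (b ⟨1, by omega⟩) (b ⟨3, by omega⟩) = 0)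
    (h2i : ∀ i : Fin n, 4 ≤ (i : ℕ) → μ (b ⟨1, by omega⟩) (b i) = 0)
    (h34 : μ (b ⟨2, by omega⟩) (b ⟨3, by omega⟩) = 0)
    (h4i : ∀ i : Fin n, 4 ≤ (i : ℕ) → μ (b ⟨3, by omega⟩) (b i) = 0)
    (hij : ∀ i j : Fin n, 4 ≤ (i : ℕ) → 4 ≤ (j : ℕ) → μ (b i) (b j) = 0) :
    ((∀ x y z : V, μ x (μ y z) + μ y (μ z x) + μ z (μ x y) = 0) ↔
      (∀ i : Fin n, 4 ≤ (i : ℕ) → c214 * c43 i = 0)) ∧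
    (∀ x1 x2 x3 x4 x5 : V, μ x1 (μ x2 (μ x3 (μ x4 x5))) = 0) ∧
    (c214 = 0 → ∀ x1 x2 x3 x4 : V, μ x1 (μ x2 (μ x3 x4)) = 0) := by
  have hμ : μ.IsAlt := fun x => by
    have h2 : (2 : ℝ) • μ x x = 0 := by rw [two_smul, ← eq_neg_iff_add_eq_zero]; exact halt x x
    exact (smul_eq_zero.1 h2).resolve_left two_ne_zero
  have h : RicciFlatBrackets hn b μ c214 c213 c413 ci13 c21 c41 c23 c43 :=
    ⟨hμ, h13, h14, h1i, h3i, h12, h23, h24, h2i, h34, h4i, hij⟩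
  exact ⟨h.jacobiator_eq_zero_iff, h.apply_apply_apply_apply_eq_zero,
    fun hc => h.apply_apply_apply_eq_zero hc⟩
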